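/- arXiv:1007.2010 — 3 statements merged into one kernel-verified Lean document; each statement's English description precedes it below -/
import Mathlib

section
/- Let N be a positive even integer. The kernel of the Schrödinger representation is exactly the subgroup {(p,q,k) ∈ ℤ³ : N divides p, N divides q, and 2N divides k}; that is, W(p,q,k) is the identity operator on the space of functions ℤ/Nℤ → ℂ if and only if N ∣ p, N ∣ q and 2N ∣ k. -/
/-
The two phase factors of `W(p,q,k)` combine into `exp(iπ z/N)` with the integer
`z = k + pq − 2qm̂`. Such a root of unity is `1` exactly when `2N ∣ z`, so `W(p,q,k)` is the
identity iff `N ∣ p` (test on a point mass) and `2N ∣ k + pq − 2qm̂` for every `m` (test on the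
constant function). Comparing `m = 0` and `m = 1` gives `N ∣ q`; then `pq` is a multiple of
`N²`, hence of `2N` because `N` is even, which leaves `2N ∣ k`.
-/

open Complex

/-- The Schrödinger representation: the operator `W(p,q,k)` acting on functions
`ZMod N → ℂ` by `(W(p,q,k)f)(m) = exp(iπ(k−pq)/N)·exp(−2πi q(m̂−p)/N)·f(m−p)`. -/
noncomputable def W (N : ℕ) (p q k : ℤ) (f : ZMod N → ℂ) : ZMod N → ℂ :=
  fun m =>
    Complex.exp (Real.pi * Complex.I * ((k : ℂ) - p * q) / N) *
    Complex.exp (-2 * Real.pi * Complex.I * q * ((m.val : ℂ) - p) / N) *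
    f (m - (p : ZMod N))

theorem W_apply (N : ℕ) (p q k : ℤ) (f : ZMod N → ℂ) (m : ZMod N) :
    W N p q k f m =
      cexp (Real.pi * I * ((k + p * q - 2 * q * m.val : ℤ) : ℂ) / N) * f (m - p) := by
  rw [W, ← Complex.exp_add]
  congr 2
  push_cast
  ring

theorem cexp_pi_mul_I_mul_intCast_div_eq_one_iff {n : ℕ} (hn : n ≠ 0) (z : ℤ) :
    cexp (Real.pi * I * z / n) = 1 ↔ (2 * n : ℤ) ∣ z := by
  have hπI : (Real.pi : ℂ) * I ≠ 0 := mul_ne_zero (by exact_mod_cast Real.pi_ne_zero) I_ne_zero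
  have hn' : (n : ℂ) ≠ 0 := by exact_mod_cast hn
  rw [Complex.exp_eq_one_iff]
  refine exists_congr fun c => ?_
  rw [div_eq_iff hn']
  constructor
  · intro h
    exact_mod_cast mul_left_cancel₀ hπI (by linear_combination h :
      (Real.pi : ℂ) * I * z = Real.pi * I * (2 * n * c))
  · rintro rfl
    push_cast
    ring

theorem W_eq_self_iff (N : ℕ) [NeZero N] (p q k : ℤ) :
    (∀ f : ZMod N → ℂ, W N p q k f = f) ↔
      (p : ZMod N) = 0 ∧ ∀ m : ZMod N, (2 * N : ℤ) ∣ k + p * q - 2 * q * m.val := by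
  simp_rw [funext_iff, W_apply, ← cexp_pi_mul_I_mul_intCast_div_eq_one_iff (NeZero.ne N)]
  constructor
  · intro h
    refine ⟨?_, fun m => by simpa using h 1 m⟩
    by_contra hp
    have hδ := h (Pi.single 0 1) p
    rw [sub_self, Pi.single_eq_same, Pi.single_eq_of_ne hp, mul_one] at hδ
    exact Complex.exp_ne_zero _ hδ
  · rintro ⟨hp, hphase⟩ f m
    rw [hp, sub_zero, hphase m, one_mul]

theorem Int.two_mul_dvd_mul_of_dvd_of_dvd {n p q : ℤ} (hn : Even n) (hp : n ∣ p) (hq : n ∣ q) :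
    2 * n ∣ p * q := by
  obtain ⟨b, rfl⟩ := hp
  obtain ⟨c, rfl⟩ := hq
  obtain ⟨r, rfl⟩ := hn
  exact ⟨r * b * c, by ring⟩

theorem forall_two_mul_dvd_phase_iff {N : ℕ} (hN : Even N) (hN1 : 1 < N) {p q k : ℤ}
    (hp : (N : ℤ) ∣ p) :
    (∀ m : ZMod N, (2 * N : ℤ) ∣ k + p * q - 2 * q * m.val) ↔
      (N : ℤ) ∣ q ∧ (2 * N : ℤ) ∣ k := by
  have hN' : Even (N : ℤ) := hN.natCast
  constructor
  · intro h
    have h0 := h 0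
    have h1 := h 1
    rw [ZMod.val_zero, Nat.cast_zero, mul_zero, sub_zero] at h0
    rw [ZMod.val_one_eq_one_mod, Nat.mod_eq_of_lt hN1, Nat.cast_one, mul_one] at h1
    have hq : (N : ℤ) ∣ q := by
      have h2q : 2 * (N : ℤ) ∣ 2 * q := by simpa using dvd_sub h0 h1
      exact (mul_dvd_mul_iff_left two_ne_zero).mp h2q
    refine ⟨hq, ?_⟩
    exact (dvd_add_left (Int.two_mul_dvd_mul_of_dvd_of_dvd hN' hp hq)).mp h0
  · rintro ⟨hq, hk⟩ m
    refine dvd_sub (dvd_add hk (Int.two_mul_dvd_mul_of_dvd_of_dvd hN' hp hq)) ?_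
    rw [mul_assoc]
    exact mul_dvd_mul_left 2 (dvd_mul_of_dvd_left hq _)

/-- the kernel of the Schrödinger representation: `W(p,q,k)` is the
identity operator on functions `ZMod N → ℂ` iff `N ∣ p`, `N ∣ q` and `2N ∣ k`. -/
theorem schroedinger_rep_kernel (N : ℕ) [NeZero N] (hNeven : Even N) (p q k : ℤ) :
    (∀ f : ZMod N → ℂ, W N p q k f = f) ↔
      ((N : ℤ) ∣ p ∧ (N : ℤ) ∣ q ∧ (2 * N : ℤ) ∣ k) := by
  have hN1 : 1 < N := by
    obtain ⟨M, rfl⟩ := hNeven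
    have := NeZero.ne (M + M)
    omega
  rw [W_eq_self_iff, ZMod.intCast_zmod_eq_zero_iff_dvd]
  exact and_congr_right (forall_two_mul_dvd_phase_iff hNeven hN1)
end

section
/- Let N be a positive even integer and set F = N^{−1/2}·Σ_{j=0}^{N−1} exp(iπj²/N)·W(0,j,0), a linear operator on the space of functions ℤ/Nℤ → ℂ. Then F is unitary with respect to the inner product ⟨f,g⟩ = Σ_m f(m)·conj(g(m)), and F satisfies the exact Egorov identity for the positive twist T = (1 1; 0 1): F∘W(p,q,0) = W(p, p+q, 0)∘F for all integers p, q. -/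
/-! Each `W(0,j,0)` is a multiplication operator, and completing the square shows that `F` is
multiplication by `N^{-1/2} G e^{-iπm²/N}` with `G = Σ_x e^{iπx²/N}`. For even `N` the phase
`x ↦ e^{iπx²/N}` is well defined on `ℤ/Nℤ` and its polarization is the standard additive
character, so `|G|² = N` by orthogonality of characters; hence `F` is unitary. The Egorov identity
reduces to `m² + pq + 2q(m - p) = p(p + q) + 2(p + q)(m - p) + (m - p)²`. -/

open Complex

/-- The operator `F = N^{−1/2}·Σ_{j=0}^{N−1} exp(iπj²/N)·W(0,j,0)` quantizing the
positive twist `T` of the torus. -/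
noncomputable def Ftwist (N : ℕ) (f : ZMod N → ℂ) : ZMod N → ℂ :=
  fun m =>
    (1 / Real.sqrt N : ℂ) *
      ∑ j ∈ Finset.range N,
        Complex.exp (Real.pi * Complex.I * (j : ℂ) ^ 2 / N) * W N 0 (j : ℤ) 0 f m

open Real
open scoped ComplexConjugate

lemma conj_mul_self_of_norm_eq_one {z : ℂ} (hz : ‖z‖ = 1) : conj z * z = 1 := by
  rw [Complex.conj_mul', hz]; norm_num

lemma sum_mul_conj_mul_of_norm_eq_one {ι : Type*} [Fintype ι] {u : ι → ℂ} (hu : ∀ i, ‖u i‖ = 1)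
    (f g : ι → ℂ) : ∑ i, u i * f i * conj (u i * g i) = ∑ i, f i * conj (g i) := by
  refine Finset.sum_congr rfl fun i _ => ?_
  rw [map_mul]
  linear_combination (f i * conj (g i)) * conj_mul_self_of_norm_eq_one (hu i)

section QuadraticPhase

variable {R : Type*} [CommRing R] [Fintype R] {ψ : AddChar R ℂ} {q : R → ℂ}

lemma sum_mul_addChar_mul_eq (hq : ∀ x, ‖q x‖ = 1)
    (hpol : ∀ x y, q (x + y) = q x * q y * ψ (x * y)) (m : R) :
    ∑ x, q x * ψ (x * m) = conj (q m) * ∑ x, q x := by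
  rw [← Equiv.sum_comp (Equiv.addRight m) q, Finset.mul_sum]
  refine Finset.sum_congr rfl fun x _ => ?_
  rw [Equiv.coe_addRight, hpol]
  linear_combination -(q x * ψ (x * m)) * conj_mul_self_of_norm_eq_one (hq m)

lemma norm_sum_eq_sqrt_card (hψ : ψ.IsPrimitive) (hq : ∀ x, ‖q x‖ = 1)
    (hpol : ∀ x y, q (x + y) = q x * q y * ψ (x * y)) :
    ‖∑ x, q x‖ = √(Fintype.card R) := by
  classical
  have hq0 : q 0 = 1 := by
    have h := hpol 0 0
    rw [add_zero, mul_zero, AddChar.map_zero_eq_one, mul_one] at h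
    have hne : q 0 ≠ 0 := by rw [← norm_ne_zero_iff, hq]; exact one_ne_zero
    exact (mul_right_eq_self₀.mp h.symm).resolve_right hne
  have hsq : (‖∑ x, q x‖ : ℂ) ^ 2 = Fintype.card R := by
    calc (‖∑ x, q x‖ : ℂ) ^ 2 = ∑ y, conj (q y) * ∑ x, q x := by
          rw [← Complex.mul_conj', map_sum, Finset.mul_sum]
          exact Finset.sum_congr rfl fun _ _ => mul_comm _ _
      _ = ∑ x, q x * ∑ y, ψ (x * y) := by
          simp_rw [← sum_mul_addChar_mul_eq hq hpol, Finset.mul_sum]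
          exact Finset.sum_comm
      _ = Fintype.card R := by
          have hrow (x : R) : ∑ y, ψ (x * y) = if x = 0 then (Fintype.card R : ℂ) else 0 := by
            simpa only [mul_comm, apply_ite Nat.cast, Nat.cast_zero] using AddChar.sum_mulShift x hψ
          simp [hrow, hq0]
  rw [← Real.sqrt_sq (norm_nonneg (∑ x, q x))]
  exact congrArg _ (by exact_mod_cast hsq)

end QuadraticPhase

noncomputable def halfPhase (N : ℕ) (a : ℤ) : ℂ := Complex.exp (π * I * a / N)

noncomputable def quadPhase (N : ℕ) (x : ZMod N) : ℂ := halfPhase N ((x.val : ℤ) ^ 2)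

section Phases

variable {N : ℕ}

lemma halfPhase_add (a b : ℤ) : halfPhase N (a + b) = halfPhase N a * halfPhase N b := by
  rw [halfPhase, halfPhase, halfPhase, ← Complex.exp_add]; push_cast; ring_nf

lemma conj_halfPhase (a : ℤ) : conj (halfPhase N a) = halfPhase N (-a) := by
  rw [halfPhase, halfPhase, ← Complex.exp_conj]; simp

lemma norm_halfPhase (a : ℤ) : ‖halfPhase N a‖ = 1 := by
  rw [halfPhase, Complex.norm_exp]; simp

lemma halfPhase_two_mul [NeZero N] (a : ℤ) :
    halfPhase N (2 * a) = ZMod.stdAddChar (a : ZMod N) := by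
  rw [halfPhase, ZMod.stdAddChar_coe]; push_cast; ring_nf

lemma halfPhase_eq_of_dvd [NeZero N] {a b : ℤ} (h : 2 * (N : ℤ) ∣ a - b) :
    halfPhase N a = halfPhase N b := by
  obtain ⟨t, ht⟩ := h
  rw [show a = b + 2 * N * t by linarith, halfPhase_add]
  have hN : (N : ℂ) ≠ 0 := NeZero.ne _
  have : halfPhase N (2 * N * t) = Complex.exp (t * (2 * π * I)) := by
    rw [halfPhase]; push_cast; field_simp
  rw [this, Complex.exp_int_mul_two_pi_mul_I, mul_one]

lemma halfPhase_sq_eq_of_dvd [NeZero N] (hN : Even N) {a b : ℤ} (h : (N : ℤ) ∣ a - b) :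
    halfPhase N (a ^ 2) = halfPhase N (b ^ 2) := by
  obtain ⟨t, ht⟩ := h
  obtain ⟨k, hk⟩ := hN
  apply halfPhase_eq_of_dvd
  refine ⟨b * t + k * t ^ 2, ?_⟩
  rw [show a = b + N * t by linarith, hk]; push_cast; ring

lemma quadPhase_intCast [NeZero N] (hN : Even N) (a : ℤ) :
    quadPhase N a = halfPhase N (a ^ 2) :=
  halfPhase_sq_eq_of_dvd hN <| (ZMod.intCast_eq_intCast_iff_dvd_sub _ _ _).mp (by simp)

lemma norm_quadPhase (x : ZMod N) : ‖quadPhase N x‖ = 1 := norm_halfPhase _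

lemma quadPhase_add [NeZero N] (hN : Even N) (x y : ZMod N) :
    quadPhase N (x + y) = quadPhase N x * quadPhase N y * ZMod.stdAddChar (x * y) := by
  obtain ⟨a, rfl⟩ := ZMod.intCast_surjective x
  obtain ⟨b, rfl⟩ := ZMod.intCast_surjective y
  rw [← Int.cast_add, ← Int.cast_mul, quadPhase_intCast hN, quadPhase_intCast hN,
    quadPhase_intCast hN, ← halfPhase_two_mul, ← halfPhase_add, ← halfPhase_add]
  ring_nf

lemma quadPhase_neg [NeZero N] (hN : Even N) (x : ZMod N) : quadPhase N (-x) = quadPhase N x := by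
  obtain ⟨a, rfl⟩ := ZMod.intCast_surjective x
  rw [← Int.cast_neg, quadPhase_intCast hN, quadPhase_intCast hN, neg_sq]

lemma norm_sum_quadPhase [NeZero N] (hN : Even N) : ‖∑ x : ZMod N, quadPhase N x‖ = √N := by
  rw [norm_sum_eq_sqrt_card (ZMod.isPrimitive_stdAddChar N) norm_quadPhase (quadPhase_add hN),
    ZMod.card]

end Phases

section Twist

variable {N : ℕ}

lemma W_zero_apply (p q : ℤ) (f : ZMod N → ℂ) (m : ZMod N) :
    W N p q 0 f m = halfPhase N (-(p * q) - 2 * q * (m.val - p)) * f (m - p) := by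
  rw [W, halfPhase, ← Complex.exp_add]; push_cast; ring_nf

variable [NeZero N]

lemma sum_range_natCast {M : Type*} [AddCommMonoid M] (g : ZMod N → M) :
    ∑ j ∈ Finset.range N, g j = ∑ x, g x :=
  Finset.sum_nbij' (↑) ZMod.val (fun _ _ => Finset.mem_univ _)
    (fun x _ => Finset.mem_range.mpr x.val_lt)
    (fun _ hj => ZMod.val_natCast_of_lt (Finset.mem_range.mp hj))
    (fun x _ => ZMod.natCast_zmod_val x) (fun _ _ => rfl)

noncomputable def twistMultiplier (N : ℕ) [NeZero N] (m : ZMod N) : ℂ :=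
  (1 / √N : ℂ) * (∑ x : ZMod N, quadPhase N x) * conj (quadPhase N m)

lemma norm_twistMultiplier (hN : Even N) (m : ZMod N) : ‖twistMultiplier N m‖ = 1 := by
  have : (0 : ℝ) < √N := Real.sqrt_pos.mpr (Nat.cast_pos.mpr (NeZero.pos N))
  simp [twistMultiplier, norm_sum_quadPhase hN, norm_quadPhase, abs_of_pos this, this.ne']

lemma Ftwist_apply (hN : Even N) (f : ZMod N → ℂ) (m : ZMod N) :
    Ftwist N f m = twistMultiplier N m * f m := by
  have hterm (j : ℕ) : Complex.exp (π * I * (j : ℂ) ^ 2 / N) * W N 0 j 0 f m =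
      quadPhase N j * ZMod.stdAddChar ((j : ZMod N) * -m) * f m := by
    have hq : quadPhase N j = halfPhase N (j ^ 2) := by simpa using quadPhase_intCast hN j
    have hψ : ZMod.stdAddChar ((j : ZMod N) * -m) = halfPhase N (2 * -(j * m.val)) := by
      rw [halfPhase_two_mul]; push_cast; simp
    rw [W_zero_apply, hq, hψ, halfPhase, halfPhase, halfPhase]
    push_cast; ring_nf
  simp_rw [Ftwist, hterm]
  rw [sum_range_natCast (fun x => quadPhase N x * ZMod.stdAddChar (x * -m) * f m), ← Finset.sum_mul,
    sum_mul_addChar_mul_eq norm_quadPhase (quadPhase_add hN), quadPhase_neg hN, twistMultiplier]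
  ring

lemma Ftwist_W (hN : Even N) (p q : ℤ) (f : ZMod N → ℂ) :
    Ftwist N (W N p q 0 f) = W N p (p + q) 0 (Ftwist N f) := by
  funext m
  have hphase : conj (quadPhase N m) * halfPhase N (-(p * q) - 2 * q * (m.val - p)) =
      halfPhase N (-(p * (p + q)) - 2 * (p + q) * (m.val - p)) * conj (quadPhase N (m - p)) := by
    have hmp : m - p = ((m.val - p : ℤ) : ZMod N) := by push_cast; simp
    rw [hmp, quadPhase_intCast hN, quadPhase, conj_halfPhase, conj_halfPhase, ← halfPhase_add,
      ← halfPhase_add]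
    ring_nf
  rw [Ftwist_apply hN, W_zero_apply, W_zero_apply, Ftwist_apply hN, twistMultiplier,
    twistMultiplier]
  linear_combination ((1 / √N : ℂ) * (∑ x, quadPhase N x) * f (m - p)) * hphase

end Twist

/-- `F` is unitary and satisfies the exact Egorov identity for the
positive twist `T = (1 1; 0 1)`: `F∘W(p,q,0) = W(p, p+q, 0)∘F`. -/
theorem twist_operator_unitary_egorov (N : ℕ) [NeZero N] (hNeven : Even N) :
    (∀ f g : ZMod N → ℂ,
      ∑ m : ZMod N, Ftwist N f m * starRingEnd ℂ (Ftwist N g m) =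
        ∑ m : ZMod N, f m * starRingEnd ℂ (g m)) ∧
    (∀ (p q : ℤ) (f : ZMod N → ℂ),
      Ftwist N (W N p q 0 f) = W N p (p + q) 0 (Ftwist N f)) := by
  refine ⟨fun f g => ?_, Ftwist_W hNeven⟩
  simp_rw [Ftwist_apply hNeven]
  exact sum_mul_conj_mul_of_norm_eq_one (norm_twistMultiplier hNeven) f g
end

section
/- Let r ≥ 2 be an integer and N = 2r. In the space of functions ℤ/2rℤ → ℂ, let δ_a denote the indicator function of a ∈ ℤ/2rℤ and set ζ_a = δ_a − δ_{−a}. For integers p, q let L_{p,q} = W(p,q,0) + W(−p,−q,0). Then the operators L_{p,q} preserve the subspace spanned by the ζ_a, and for every integer j: L_{p,q}·ζ_j = exp(−iπpq/(2r))·( exp(iπqj/r)·ζ_{j−p} + exp(−iπqj/r)·ζ_{j+p} ), where the indices of ζ are taken modulo 2r. (This is the Weyl quantization of the Wilson line 2cos 2π(px+qy) on the moduli space of flat SU(2)-connections on the torus, acting on the odd theta series.) -/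
open Complex

/-- The odd vector `ζ_a = δ_a − δ_{−a}` in `ZMod 2r → ℂ`. -/
def zeta (r : ℕ) (a : ZMod (2 * r)) : ZMod (2 * r) → ℂ :=
  fun m => (if m = a then 1 else 0) - (if m = -a then 1 else 0)

/-- The quantized Wilson line `L_{p,q} = W(p,q,0) + W(−p,−q,0)`. -/
noncomputable def Lop (r : ℕ) (p q : ℤ) (f : ZMod (2 * r) → ℂ) : ZMod (2 * r) → ℂ :=
  W (2 * r) p q 0 f + W (2 * r) (-p) (-q) 0 f

/-!
`W(p,q,k)` sends the indicator `δ_a` to a multiple of `δ_{a+p}`; the phase `exp (-2πi q â / N)`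
is well defined on `ZMod N` since `j ↦ exp (2πi j / N)` is the standard additive character of
`ZMod N`. Expanding `ζ_j = δ_j - δ_{-j}`, the four terms of `L_{p,q} ζ_j` pair up into `ζ_{j-p}`
and `ζ_{j+p}` with the stated phases, and linearity of `L_{p,q}` gives invariance of the span.
-/

lemma exp_two_pi_I_mul_div_eq_of_intCast_eq {N : ℕ} [NeZero N] {x y : ℤ}
    (h : (x : ZMod N) = y) :
    exp (2 * Real.pi * I * x / N) = exp (2 * Real.pi * I * y / N) := by
  rw [← ZMod.stdAddChar_coe, ← ZMod.stdAddChar_coe, h]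

noncomputable def Wₗ (N : ℕ) (p q k : ℤ) : (ZMod N → ℂ) →ₗ[ℂ] ZMod N → ℂ where
  toFun := W N p q k
  map_add' f g := by ext m; simp only [W, Pi.add_apply]; ring
  map_smul' c f := by ext m; simp only [W, Pi.smul_apply, smul_eq_mul, RingHom.id_apply]; ring

lemma coe_Wₗ (N : ℕ) (p q k : ℤ) : ⇑(Wₗ N p q k) = W N p q k := rfl

noncomputable def Lopₗ (r : ℕ) (p q : ℤ) : (ZMod (2 * r) → ℂ) →ₗ[ℂ] ZMod (2 * r) → ℂ :=
  Wₗ (2 * r) p q 0 + Wₗ (2 * r) (-p) (-q) 0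

lemma coe_Lopₗ (r : ℕ) (p q : ℤ) : ⇑(Lopₗ r p q) = Lop r p q := rfl

lemma zeta_eq_single_sub_single (r : ℕ) (a : ZMod (2 * r)) :
    zeta r a = Pi.single a 1 - Pi.single (-a) 1 := by
  ext m
  simp only [zeta, Pi.sub_apply, Pi.single_apply]

lemma W_single (N : ℕ) [NeZero N] (p q k a : ℤ) :
    W N p q k (Pi.single (a : ZMod N) 1) =
      (exp (Real.pi * I * ((k : ℂ) - p * q) / N) * exp (-2 * Real.pi * I * q * a / N)) •
        Pi.single ((a + p : ℤ) : ZMod N) 1 := by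
  ext m
  simp only [W, Pi.smul_apply, Pi.single_apply, smul_eq_mul, sub_eq_iff_eq_add, Int.cast_add]
  split_ifs with hm
  -- the phase `exp (-2πi q (m̂ - p) / N)` only depends on `m̂ - p` modulo `N`, and `m - p = a`
  · have hval : (((-(q * ((m.val : ℤ) - p)) : ℤ)) : ZMod N) = ((-(q * a) : ℤ) : ZMod N) := by
      push_cast
      rw [ZMod.natCast_zmod_val, hm]
      ring
    have := exp_two_pi_I_mul_div_eq_of_intCast_eq hval
    push_cast at this
    rw [mul_one, mul_one]
    congr 1
    convert this using 2 <;> ring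
  · rw [mul_zero, mul_zero]

lemma Lop_zeta (r : ℕ) [NeZero r] (p q j : ℤ) :
    Lop r p q (zeta r ((j : ℤ) : ZMod (2 * r))) =
      exp (-(Real.pi) * I * p * q / (2 * r)) •
        (exp (Real.pi * I * q * j / r) • zeta r (((j - p : ℤ)) : ZMod (2 * r)) +
          exp (-(Real.pi) * I * q * j / r) • zeta r (((j + p : ℤ)) : ZMod (2 * r))) := by
  simp only [zeta_eq_single_sub_single, ← coe_Lopₗ, map_sub, Lopₗ, LinearMap.add_apply,
    ← Int.cast_neg,
    coe_Wₗ, W_single]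
  have hr : (r : ℂ) ≠ 0 := Nat.cast_ne_zero.mpr (NeZero.ne r)
  set c := exp (-(Real.pi) * I * p * q / (2 * r))
  set a := exp (Real.pi * I * q * j / r)
  set b := exp (-(Real.pi) * I * q * j / r)
  have hc : exp (Real.pi * I * (((0 : ℤ) : ℂ) - p * q) / ((2 * r : ℕ) : ℂ)) = c := by
    congr 1; push_cast; ring
  have hc' : exp (Real.pi * I * (((0 : ℤ) : ℂ) - ((-p : ℤ) : ℂ) * ((-q : ℤ) : ℂ)) /
      ((2 * r : ℕ) : ℂ)) = c := by
    congr 1; push_cast; ring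
  have ha : exp (-2 * Real.pi * I * ((-q : ℤ) : ℂ) * j / ((2 * r : ℕ) : ℂ)) = a := by
    congr 1; push_cast; field_simp
  have ha' : exp (-2 * Real.pi * I * q * ((-j : ℤ) : ℂ) / ((2 * r : ℕ) : ℂ)) = a := by
    congr 1; push_cast; field_simp
  have hb : exp (-2 * Real.pi * I * q * j / ((2 * r : ℕ) : ℂ)) = b := by
    congr 1; push_cast; field_simp
  have hb' : exp (-2 * Real.pi * I * ((-q : ℤ) : ℂ) * ((-j : ℤ) : ℂ) / ((2 * r : ℕ) : ℂ)) = b := by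
    congr 1; push_cast; field_simp
  rw [hc, hc', ha, ha', hb, hb', show j + -p = j - p by ring, show -j + p = -(j - p) by ring,
    show -j + -p = -(j + p) by ring]
  module

lemma Lop_mem_span_zeta (r : ℕ) [NeZero r] (p q : ℤ) {f : ZMod (2 * r) → ℂ}
    (hf : f ∈ Submodule.span ℂ (Set.range (zeta r))) :
    Lop r p q f ∈ Submodule.span ℂ (Set.range (zeta r)) := by
  have hzeta : ∀ a, zeta r a ∈ Submodule.span ℂ (Set.range (zeta r)) :=
    fun a => Submodule.subset_span ⟨a, rfl⟩
  have hgen : Set.range (zeta r) ⊆ (Submodule.span ℂ (Set.range (zeta r))).comap (Lopₗ r p q) := by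
    rintro _ ⟨a, rfl⟩
    obtain ⟨j, rfl⟩ := ZMod.intCast_surjective a
    rw [SetLike.mem_coe, Submodule.mem_comap, coe_Lopₗ, Lop_zeta]
    exact Submodule.smul_mem _ _ (Submodule.add_mem _ (Submodule.smul_mem _ _ (hzeta _))
      (Submodule.smul_mem _ _ (hzeta _)))
  exact Submodule.span_le.mpr hgen hf

/-- the operators `L_{p,q}` preserve the span of the `ζ_a`, and
`L_{p,q}·ζ_j = exp(−iπpq/(2r))·(exp(iπqj/r)·ζ_{j−p} + exp(−iπqj/r)·ζ_{j+p})`. -/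
theorem wilson_line_on_odd_theta (r : ℕ) (hr : 2 ≤ r) (p q : ℤ) :
    (∀ f ∈ Submodule.span ℂ (Set.range (zeta r)),
      Lop r p q f ∈ Submodule.span ℂ (Set.range (zeta r))) ∧
    (∀ j : ℤ,
      Lop r p q (zeta r ((j : ℤ) : ZMod (2 * r))) =
        Complex.exp (-(Real.pi) * Complex.I * p * q / (2 * r)) •
          (Complex.exp (Real.pi * Complex.I * q * j / r) •
              zeta r (((j - p : ℤ)) : ZMod (2 * r)) +
            Complex.exp (-(Real.pi) * Complex.I * q * j / r) •
              zeta r (((j + p : ℤ)) : ZMod (2 * r)))) := by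
  have : NeZero r := ⟨by omega⟩
  exact ⟨fun _ hf => Lop_mem_span_zeta r p q hf, Lop_zeta r p q⟩
end
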